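/- arXiv:math/0212309 — 2 statements merged into one kernel-verified Lean document; each statement's English description precedes it below -/
import Mathlib

section
/- Let a₁,...,a_n ∈ ℤⁿ and c₁,...,c_n ∈ ℂ*, and let E be the n×n matrix whose i-th row is a_i. If det(E) ≠ 0, then the binomial system x^{a₁} = c₁, ..., x^{a_n} = c_n has exactly |det E| solutions in (ℂ*)ⁿ. -/
open Finset in
private lemma zpow_sum' {G : Type*} [CommGroup G] (a : G) {ι : Type*} (s : Finset ι)
    (f : ι → ℤ) : a ^ (∑ j ∈ s, f j) = ∏ j ∈ s, a ^ f j := by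
  induction s using Finset.cons_induction with
  | empty => simp
  | cons i s hi ih => rw [Finset.sum_cons, Finset.prod_cons, zpow_add, ih]

/-- The monoid hom on the torus induced by an integer matrix. -/
private def phiE (n : ℕ) (A : Matrix (Fin n) (Fin n) ℤ) :
    (Fin n → ℂˣ) →* (Fin n → ℂˣ) where
  toFun x := fun i => ∏ j, x j ^ A i j
  map_one' := by funext i; simp
  map_mul' x y := by funext i; simp [mul_zpow, Finset.prod_mul_distrib]

private lemma phiE_apply (n : ℕ) (A : Matrix (Fin n) (Fin n) ℤ) (x : Fin n → ℂˣ) (i : Fin n) :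
    phiE n A x i = ∏ j, x j ^ A i j := rfl

private lemma phiE_phiE (n : ℕ) (A B : Matrix (Fin n) (Fin n) ℤ) (x : Fin n → ℂˣ) :
    phiE n A (phiE n B x) = phiE n (A * B) x := by
  funext i
  simp only [phiE_apply]
  calc ∏ j, (∏ k, x k ^ B j k) ^ A i j
      = ∏ j, ∏ k, x k ^ (B j k * A i j) := by
        refine Finset.prod_congr rfl fun j _ => ?_
        rw [← Finset.prod_zpow]
        exact Finset.prod_congr rfl fun k _ => (zpow_mul _ _ _).symm
    _ = ∏ k, ∏ j, x k ^ (B j k * A i j) := Finset.prod_comm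
    _ = ∏ k, x k ^ ((A * B) i k) := by
        refine Finset.prod_congr rfl fun k _ => ?_
        rw [Matrix.mul_apply, zpow_sum']
        exact Finset.prod_congr rfl fun j _ => by rw [mul_comm]

private lemma phiE_smul_one (n : ℕ) (d : ℤ) (x : Fin n → ℂˣ) :
    phiE n (d • (1 : Matrix (Fin n) (Fin n) ℤ)) x = fun i => x i ^ d := by
  funext i
  rw [phiE_apply, Finset.prod_eq_single i]
  · simp
  · intro j _ hj
    simp [Matrix.one_apply, (Ne.symm hj)]
  · simp

private lemma exists_zpow_eq (u : ℂˣ) {d : ℤ} (hd : d ≠ 0) : ∃ v : ℂˣ, v ^ d = u := by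
  have key : ∀ (w : ℂˣ) (m : ℕ), m ≠ 0 → ∃ v : ℂˣ, v ^ (m : ℤ) = w := by
    intro w m hm
    obtain ⟨z, hz⟩ := IsAlgClosed.exists_pow_nat_eq (w : ℂ) (Nat.pos_of_ne_zero hm)
    have hz0 : z ≠ 0 := by
      intro h
      rw [h, zero_pow hm] at hz
      exact w.ne_zero hz.symm
    exact ⟨Units.mk0 z hz0, by ext; simp [hz]⟩
  rcases hd.lt_or_gt with h | h
  · obtain ⟨v, hv⟩ := key u⁻¹ (-d).toNat (by omega)
    rw [Int.toNat_of_nonneg (by omega), zpow_neg] at hv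
    exact ⟨v, by rw [← inv_inv (v ^ d), hv, inv_inv]⟩
  · obtain ⟨v, hv⟩ := key u d.toNat (by omega)
    rw [Int.toNat_of_nonneg h.le] at hv
    exact ⟨v, hv⟩

private lemma phiE_surjective (n : ℕ) (E : Matrix (Fin n) (Fin n) ℤ) (hE : E.det ≠ 0) :
    Function.Surjective (phiE n E) := by
  intro y
  choose z hz using fun i => exists_zpow_eq (y i) hE
  refine ⟨phiE n E.adjugate z, ?_⟩
  rw [phiE_phiE, Matrix.mul_adjugate, phiE_smul_one]
  exact funext hz

open Matrix in
private lemma toLin'_injective {n : ℕ} (E : Matrix (Fin n) (Fin n) ℤ) (hE : E.det ≠ 0) :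
    Function.Injective (Matrix.toLin' E) := by
  rw [injective_iff_map_eq_zero]
  intro v hv
  have hv' : E *ᵥ v = 0 := by rwa [Matrix.toLin'_apply] at hv
  have h1 : E.adjugate *ᵥ (E *ᵥ v) = 0 := by rw [hv', Matrix.mulVec_zero]
  rw [Matrix.mulVec_mulVec, Matrix.adjugate_mul] at h1
  have h2 : E.det • v = 0 := by
    simpa [Matrix.smul_mulVec, Matrix.one_mulVec] using h1
  rcases smul_eq_zero.mp h2 with h | h
  · exact absurd h hE
  · exact h

private lemma prod_natAbs_eq_det {n : ℕ} (E : Matrix (Fin n) (Fin n) ℤ) (hE : E.det ≠ 0)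
    (N : Submodule ℤ (Fin n → ℤ)) (hN : N = LinearMap.range (Matrix.toLin' E))
    (snf : Module.Basis.SmithNormalForm N (Fin n) n) :
    ∏ i, (snf.a i).natAbs = E.det.natAbs := by
  classical
  have hinj := toLin'_injective E hE
  have hfbij : Function.Bijective snf.f := Finite.injective_iff_bijective.mp snf.f.injective
  set σ : Equiv.Perm (Fin n) := Equiv.ofBijective _ hfbij with hσ
  have hσf : ∀ j, σ j = snf.f j := fun j => rfl
  have hσs : ∀ i j, σ.symm i = j ↔ snf.f j = i := by
    intro i j
    rw [Equiv.symm_apply_eq, hσf, eq_comm]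
  let e₁ : (Fin n → ℤ) ≃ₗ[ℤ] N := snf.bM.equiv snf.bN (Equiv.refl _)
  let e₂ : (Fin n → ℤ) ≃ₗ[ℤ] N :=
    (LinearEquiv.ofInjective _ hinj).trans (LinearEquiv.ofEq _ _ hN.symm)
  let h₁ : (Fin n → ℤ) →ₗ[ℤ] (Fin n → ℤ) := N.subtype ∘ₗ e₁.toLinearMap
  let h₂ : (Fin n → ℤ) →ₗ[ℤ] (Fin n → ℤ) := N.subtype ∘ₗ e₂.toLinearMap
  have hdet12 : (LinearMap.det h₁).natAbs = (LinearMap.det h₂).natAbs :=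
    Int.natAbs_eq_iff_associated.mpr (LinearMap.associated_det_comp_equiv _ _ _)
  have hh₂ : h₂ = Matrix.toLin' E := by
    ext v
    simp [h₂, e₂]
  have hdet2 : LinearMap.det h₂ = E.det := by rw [hh₂, LinearMap.det_toLin']
  have hM1 : LinearMap.toMatrix snf.bM snf.bM h₁ =
      (σ.symm.toPEquiv.toMatrix : Matrix (Fin n) (Fin n) ℤ) * Matrix.diagonal snf.a := by
    ext i j
    rw [LinearMap.toMatrix_apply, Matrix.mul_diagonal]
    have h1 : h₁ (snf.bM j) = ((snf.bN j : Fin n → ℤ)) := by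
      simp [h₁, e₁, Module.Basis.equiv_apply]
    rw [h1, snf.snf j, map_smul, Module.Basis.repr_self, PEquiv.toMatrix_apply, Equiv.toPEquiv_apply,
      Finsupp.smul_apply, Finsupp.single_apply]
    by_cases h : snf.f j = i <;>
      simp [Option.mem_some_iff, hσs, h, smul_eq_mul]
  have hdet1 : (LinearMap.det h₁).natAbs = (∏ i, snf.a i).natAbs := by
    rw [← LinearMap.det_toMatrix snf.bM, hM1, Matrix.det_mul, Matrix.det_permutation,
      Matrix.det_diagonal, Int.natAbs_mul]
    simp [Int.cast_id, Int.units_natAbs]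
  calc ∏ i, (snf.a i).natAbs = (∏ i, snf.a i).natAbs := (map_prod Int.natAbsHom _ _).symm
    _ = (LinearMap.det h₁).natAbs := hdet1.symm
    _ = E.det.natAbs := by rw [hdet12, hdet2]

private lemma index_range_toLin' {n : ℕ} (E : Matrix (Fin n) (Fin n) ℤ) (hE : E.det ≠ 0) :
    (LinearMap.range (Matrix.toLin' E)).toAddSubgroup.index = E.det.natAbs := by
  classical
  set N : Submodule ℤ (Fin n → ℤ) := LinearMap.range (Matrix.toLin' E) with hN
  obtain ⟨m, snf⟩ := N.smithNormalForm (Pi.basisFun ℤ (Fin n))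
  have hinj : Function.Injective (Matrix.toLin' E) := toLin'_injective E hE
  have hne : N.toAddSubgroup.index ≠ 0 := by
    rw [Int.submodule_toAddSubgroup_index_ne_zero_iff]
    exact ⟨((LinearEquiv.ofInjective _ hinj).symm : N ≃ₗ[ℤ] (Fin n → ℤ))⟩
  have hm : m = n := by
    have := snf.toAddSubgroup_index_ne_zero_iff.mp hne
    simpa using this
  subst hm
  have hidx : N.toAddSubgroup.index = ∏ i, (snf.a i).natAbs := by
    rw [snf.toAddSubgroup_index_eq_ite, if_pos (by simp)]
    refine Finset.prod_congr rfl fun i _ => ?_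
    rw [Ideal.span_singleton_toAddSubgroup_eq_zmultiples, Int.index_zmultiples]
  rw [hidx]
  exact prod_natAbs_eq_det E hE N hN snf



private lemma addChar_isUnit {A : Type*} [AddCommGroup A] (ψ : AddChar A ℂ) (a : A) :
    IsUnit (ψ a) :=
  IsUnit.of_mul_eq_one (ψ (-a)) (by rw [← AddChar.map_add_eq_mul]; simp)

/-- `ℂˣ`-valued additive homs on `A` are the same as `ℂ`-valued additive characters. -/
private noncomputable def addCharEquivHom {A : Type*} [AddCommGroup A] : (A →+ Additive ℂˣ) ≃ AddChar A ℂ where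
  toFun g :=
    { toFun := fun a => ((g a).toMul : ℂ)
      map_zero_eq_one' := by simp
      map_add_eq_mul' := fun a b => by
        show ((g (a + b)).toMul : ℂ) = _
        rw [map_add, toMul_add, Units.val_mul] }
  invFun ψ :=
    { toFun := fun a => Additive.ofMul (addChar_isUnit ψ a).unit
      map_zero' := by
        have : (addChar_isUnit ψ 0).unit = 1 := by
          ext; simp [IsUnit.unit_spec]
        simp [this]
      map_add' := fun a b => by
        have : (addChar_isUnit ψ (a + b)).unit =
            (addChar_isUnit ψ a).unit * (addChar_isUnit ψ b).unit := by
          ext; simp [IsUnit.unit_spec, AddChar.map_add_eq_mul]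
        simp [this] }
  left_inv g := by
    ext a : 1
    apply Additive.toMul.injective
    ext
    simp [IsUnit.unit_spec]
  right_inv ψ := by
    ext a
    simp [IsUnit.unit_spec]

private lemma card_hom_eq {A : Type*} [AddCommGroup A] [Finite A] :
    Nat.card (A →+ Additive ℂˣ) = Nat.card A := by
  have : Fintype A := Fintype.ofFinite A
  rw [Nat.card_congr (addCharEquivHom (A := A)), Nat.card_eq_fintype_card,
    Nat.card_eq_fintype_card, AddChar.card_eq]


private def chiHom (n : ℕ) (x : Fin n → ℂˣ) : (Fin n → ℤ) →+ Additive ℂˣ where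
  toFun v := Additive.ofMul (∏ j, x j ^ v j)
  map_zero' := by simp
  map_add' v w := by
    simp only [Pi.add_apply, zpow_add, Finset.prod_mul_distrib, ← ofMul_mul]

private lemma chiHom_single (n : ℕ) (x : Fin n → ℂˣ) (j : Fin n) (m : ℤ) :
    chiHom n x (Pi.single j m) = Additive.ofMul (x j ^ m) := by
  show Additive.ofMul (∏ k, x k ^ (Pi.single j m : Fin n → ℤ) k) = _
  congr 1
  rw [Finset.prod_eq_single j]
  · simp
  · intro k _ hk
    simp [Pi.single_apply, hk]
  · simp

private lemma row_mem_range (n : ℕ) (E : Matrix (Fin n) (Fin n) ℤ) (i : Fin n) :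
    E i ∈ LinearMap.range (Matrix.toLin' E.transpose) := by
  refine ⟨Pi.single i 1, ?_⟩
  funext k
  simp [Matrix.toLin'_apply, Matrix.mulVec_single]

private lemma chiHom_vanish (n : ℕ) (E : Matrix (Fin n) (Fin n) ℤ) (x : Fin n → ℂˣ)
    (hx : phiE n E x = 1) :
    ∀ v ∈ (LinearMap.range (Matrix.toLin' E.transpose)).toAddSubgroup, chiHom n x v = 0 := by
  intro v hv
  obtain ⟨y, rfl⟩ := (Submodule.mem_toAddSubgroup _).mp hv
  show Additive.ofMul (∏ j, x j ^ (Matrix.toLin' E.transpose y) j) = 0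
  have hcoord : ∀ j, (Matrix.toLin' E.transpose y) j = ∑ i, E i j * y i := by
    intro j
    simp [Matrix.toLin'_apply, Matrix.mulVec, dotProduct, Matrix.transpose_apply]
  have : (∏ j, x j ^ (Matrix.toLin' E.transpose y) j) = 1 := by
    calc ∏ j, x j ^ (Matrix.toLin' E.transpose y) j
        = ∏ j, ∏ i, (x j ^ E i j) ^ y i := by
          refine Finset.prod_congr rfl fun j _ => ?_
          rw [hcoord j, zpow_sum']
          exact Finset.prod_congr rfl fun i _ => by rw [← zpow_mul]
      _ = ∏ i, ∏ j, (x j ^ E i j) ^ y i := Finset.prod_comm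
      _ = ∏ i, (phiE n E x i) ^ y i := by
          refine Finset.prod_congr rfl fun i _ => ?_
          rw [phiE_apply, ← Finset.prod_zpow]
      _ = 1 := by rw [hx]; simp
  rw [this]
  rfl

private lemma ker_card (n : ℕ) (E : Matrix (Fin n) (Fin n) ℤ) (hE : E.det ≠ 0) :
    Nat.card ((phiE n E).ker) = E.det.natAbs := by
  classical
  have hEt : E.transpose.det ≠ 0 := by rwa [Matrix.det_transpose]
  set H : AddSubgroup (Fin n → ℤ) := (LinearMap.range (Matrix.toLin' E.transpose)).toAddSubgroup with hH
  have hidx : H.index = E.det.natAbs := by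
    rw [hH, index_range_toLin' E.transpose hEt, Matrix.det_transpose]
  have hfin : Finite ((Fin n → ℤ) ⧸ H) := by
    apply Nat.finite_of_card_ne_zero
    have : H.index ≠ 0 := by rw [hidx]; exact Int.natAbs_ne_zero.mpr hE
    exact this
  let Φ : ((phiE n E).ker) → ((Fin n → ℤ) ⧸ H →+ Additive ℂˣ) := fun x =>
    QuotientAddGroup.lift H (chiHom n x.1) (chiHom_vanish n E x.1 x.2)
  have hΦbij : Function.Bijective Φ := by
    constructor
    · rintro ⟨x, hx⟩ ⟨y, hy⟩ h
      have h1 : ∀ j : Fin n, chiHom n x (Pi.single j 1) = chiHom n y (Pi.single j 1) := by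
        intro j
        have := congrFun (congrArg (·.toFun) h) (QuotientAddGroup.mk (Pi.single j 1))
        exact this
      ext j : 2
      have := h1 j
      rw [chiHom_single, chiHom_single] at this
      simpa using Additive.ofMul.injective this
    · intro g
      set x : Fin n → ℂˣ := fun j => (g (QuotientAddGroup.mk (Pi.single j 1))).toMul with hxdef
      have hgval : ∀ (j : Fin n) (m : ℤ),
          g (QuotientAddGroup.mk (Pi.single j m)) = Additive.ofMul (x j ^ m) := by
        intro j m
        have h1 : (Pi.single j m : Fin n → ℤ) = m • Pi.single j 1 := by
          funext k
          simp [Pi.single_apply]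
        rw [h1, QuotientAddGroup.mk_zsmul, map_zsmul, ofMul_zpow]
        rfl
      have hxker : phiE n E x = 1 := by
        funext i
        have hrow : QuotientAddGroup.mk (E i) = (0 : (Fin n → ℤ) ⧸ H) :=
          (QuotientAddGroup.eq_zero_iff _).mpr ((Submodule.mem_toAddSubgroup _).mpr
            (row_mem_range n E i))
        have hsum : (E i : Fin n → ℤ) = ∑ j, Pi.single j (E i j) := by
          rw [Finset.univ_sum_single]
        have : Additive.ofMul (∏ j, x j ^ E i j) = 0 := by
          calc Additive.ofMul (∏ j, x j ^ E i j)
              = ∑ j, Additive.ofMul (x j ^ E i j) := by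
                rw [← ofMul_prod]
            _ = ∑ j, g (QuotientAddGroup.mk (Pi.single j (E i j))) := by
                exact Finset.sum_congr rfl fun j _ => (hgval j (E i j)).symm
            _ = g (QuotientAddGroup.mk (∑ j, Pi.single j (E i j))) := by
                rw [show (QuotientAddGroup.mk (∑ j, Pi.single j (E i j)) : (Fin n → ℤ) ⧸ H) =
                  ∑ j, QuotientAddGroup.mk (Pi.single j (E i j)) from
                    map_sum (QuotientAddGroup.mk' H) _ _, map_sum]
            _ = 0 := by rw [← hsum, hrow, map_zero]
        show (∏ j, x j ^ E i j) = 1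
        simpa using Additive.ofMul.injective this
      refine ⟨⟨x, hxker⟩, ?_⟩
      refine QuotientAddGroup.addMonoidHom_ext _ ?_
      refine AddMonoidHom.functions_ext _ _ _ fun j m => ?_
      show chiHom n x (Pi.single j m) = g (QuotientAddGroup.mk (Pi.single j m))
      rw [chiHom_single, hgval]
  rw [Nat.card_eq_of_bijective Φ hΦbij, card_hom_eq]
  exact hidx

/-- If det E ≠ 0 where E has rows a₁,…,a_n ∈ ℤⁿ, the binomial system
x^{a_i} = c_i has exactly |det E| solutions in the torus (ℂ*)ⁿ. -/
theorem binomial_system_card_det (n : ℕ) (E : Matrix (Fin n) (Fin n) ℤ)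
    (hE : E.det ≠ 0) (c : Fin n → ℂ) (hc : ∀ i, c i ≠ 0) :
    {x : Fin n → ℂ | (∀ i, x i ≠ 0) ∧
      ∀ i, ∏ j, x j ^ E i j = c i}.ncard = E.det.natAbs := by
  classical
  rw [← Nat.card_coe_set_eq]
  set cu : Fin n → ℂˣ := fun i => Units.mk0 (c i) (hc i) with hcu
  have hval : ∀ (x : Fin n → ℂˣ) (i : Fin n),
      ((phiE n E x i : ℂ)) = ∏ j, (x j : ℂ) ^ E i j := by
    intro x i
    rw [phiE_apply]
    calc ((∏ j, x j ^ E i j : ℂˣ) : ℂ) = ∏ j, ((x j ^ E i j : ℂˣ) : ℂ) :=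
          map_prod (Units.coeHom ℂ) _ _
      _ = ∏ j, (x j : ℂ) ^ E i j := by
          exact Finset.prod_congr rfl fun j _ => Units.val_zpow_eq_zpow_val _ _
  have hmemT : ∀ x : Fin n → ℂˣ,
      (phiE n E x = cu ↔ ∀ i, ∏ j, (x j : ℂ) ^ E i j = c i) := by
    intro x
    rw [funext_iff]
    refine forall_congr' fun i => ?_
    rw [Units.ext_iff, hval]
    rfl
  obtain ⟨x₀, hx₀⟩ := phiE_surjective n E hE cu
  let e1 : {x : Fin n → ℂ | (∀ i, x i ≠ 0) ∧ ∀ i, ∏ j, x j ^ E i j = c i} ≃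
      {x : Fin n → ℂˣ // phiE n E x = cu} :=
    { toFun := fun p => ⟨fun j => Units.mk0 (p.1 j) (p.2.1 j),
        (hmemT _).mpr (fun i => p.2.2 i)⟩
      invFun := fun q => ⟨fun j => (q.1 j : ℂ),
        ⟨fun j => (q.1 j).ne_zero, fun i => (hmemT _).mp q.2 i⟩⟩
      left_inv := fun p => Subtype.ext (funext fun j => rfl)
      right_inv := fun q => Subtype.ext (funext fun j => Units.ext rfl) }
  let e2 : {x : Fin n → ℂˣ // phiE n E x = cu} ≃ (phiE n E).ker :=
    { toFun := fun q => ⟨x₀⁻¹ * q.1, by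
        rw [MonoidHom.mem_ker, map_mul, map_inv, hx₀, q.2, inv_mul_cancel]⟩
      invFun := fun k => ⟨x₀ * k.1, by
        have hk : phiE n E k.1 = 1 := k.2
        rw [map_mul, hx₀, hk, mul_one]⟩
      left_inv := fun q => Subtype.ext (by simp)
      right_inv := fun k => Subtype.ext (by simp) }
  rw [Nat.card_congr (e1.trans e2)]
  exact ker_card n E hE
end

section
/- If H is the zero set in ℂ^N of a nonzero polynomial and B is an open ball in ℂ^N (viewed as ℝ^{2N}), then B \ H is path-connected. -/
open MvPolynomial Polynomial Set Metric

/-- Restriction of a multivariate polynomial to a complex line. -/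
lemma eval_line {N : ℕ} (p : MvPolynomial (Fin N) ℂ) (a d : Fin N → ℂ) (t : ℂ) :
    Polynomial.eval t
      (MvPolynomial.aeval (fun i => Polynomial.C (a i) + Polynomial.C (d i) * Polynomial.X) p)
    = MvPolynomial.eval (fun i => a i + t * d i) p := by
  induction p using MvPolynomial.induction_on with
  | C c => simp [MvPolynomial.aeval_C, Polynomial.eval_C]
  | add p q hp hq => simp [map_add, hp, hq]
  | mul_X p i hp => simp [map_mul, hp]; exact Or.inl (mul_comm _ _)

lemma exists_ne_zero_mem_ball {N : ℕ} (p : MvPolynomial (Fin N) ℂ) (hp : p ≠ 0)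
    (z : Fin N → ℂ) (r : ℝ) (hr : 0 < r) :
    ∃ a ∈ Metric.ball z r, MvPolynomial.eval a p ≠ 0 := by
  by_contra h
  push_neg at h
  apply hp
  apply MvPolynomial.funext (q := 0)
  intro w
  simp only [map_zero]
  set Q : Polynomial ℂ :=
    MvPolynomial.aeval (fun i => Polynomial.C (z i) + Polynomial.C (w i - z i) * Polynomial.X) p
    with hQ
  have hδ : 0 < r / (‖w - z‖ + 1) := by positivity
  have hQ0 : Q = 0 := by
    apply Polynomial.eq_zero_of_infinite_isRoot
    apply Set.Infinite.mono (s := (fun u : ℝ => (u : ℂ)) '' Set.Ioo 0 (r / (‖w - z‖ + 1)))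
    · rintro - ⟨u, hu, rfl⟩
      have hmem : (fun i => z i + (u : ℂ) * (w i - z i)) ∈ Metric.ball z r := by
        have : (fun i => z i + (u : ℂ) * (w i - z i)) = z + (u : ℂ) • (w - z) := by
          funext i; simp
        rw [this, Metric.mem_ball]
        have : dist (z + (u : ℂ) • (w - z)) z = ‖(u : ℂ) • (w - z)‖ := by
          simp [dist_eq_norm]
        rw [this, norm_smul]
        have h1 : ‖(u : ℂ)‖ = u := by
          simp [Complex.norm_real, abs_of_pos hu.1]
        rw [h1]
        calc u * ‖w - z‖ ≤ u * (‖w - z‖ + 1) := by nlinarith [hu.1.le]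
          _ < r / (‖w - z‖ + 1) * (‖w - z‖ + 1) := by
              apply mul_lt_mul_of_pos_right hu.2; positivity
          _ = r := by field_simp
      show Q.IsRoot _
      rw [Polynomial.IsRoot, hQ, eval_line]
      exact h _ hmem
    · apply Set.Infinite.image
      · exact fun x _ y _ hxy => by exact_mod_cast hxy
      · exact Set.Ioo_infinite hδ
  have := eval_line p z (fun i => w i - z i) 1
  rw [← hQ, hQ0] at this
  simpa using this.symm

/-- If H is the zero set in ℂ^N of a nonzero polynomial and B is an open ball,
then B \ H is path-connected. -/
theorem ball_diff_hypersurface_pathConnected (N : ℕ)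
    (p : MvPolynomial (Fin N) ℂ) (hp : p ≠ 0)
    (z : Fin N → ℂ) (r : ℝ) (hr : 0 < r) :
    IsPathConnected
      (Metric.ball z r \ {x : Fin N → ℂ | MvPolynomial.eval x p = 0}) := by
  obtain ⟨a₀, ha₀, ha₀'⟩ := exists_ne_zero_mem_ball p hp z r hr
  rw [isPathConnected_iff]
  refine ⟨⟨a₀, ha₀, ha₀'⟩, ?_⟩
  rintro a ⟨haB, haH⟩ b ⟨hbB, hbH⟩
  simp only [Set.mem_setOf_eq] at haH hbH
  -- the complex line through a and b
  set φ : ℂ → (Fin N → ℂ) := fun t => fun i => a i + t * (b i - a i) with hφ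
  have hφcont : Continuous φ := by
    apply continuous_pi
    intro i
    fun_prop
  have hφ0 : φ 0 = a := by funext i; simp [hφ]
  have hφ1 : φ 1 = b := by funext i; simp [hφ]
  set Q : Polynomial ℂ :=
    MvPolynomial.aeval (fun i => Polynomial.C (a i) + Polynomial.C (b i - a i) * Polynomial.X) p
    with hQdef
  have hQeval : ∀ t, Q.eval t = MvPolynomial.eval (φ t) p := fun t =>
    eval_line p a (fun i => b i - a i) t
  have hQa : Q.eval 0 = MvPolynomial.eval a p := by rw [hQeval, hφ0]
  have hQb : Q.eval 1 = MvPolynomial.eval b p := by rw [hQeval, hφ1]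
  have hQne : Q ≠ 0 := fun h => haH (by rw [← hQa, h, Polynomial.eval_zero])
  set Z : Set ℂ := {t | Q.IsRoot t} with hZ
  have hZfin : Z.Finite := Polynomial.finite_setOf_isRoot hQne
  set T : Set ℂ := φ ⁻¹' (Metric.ball z r) with hT
  have hTopen : IsOpen T := Metric.isOpen_ball.preimage hφcont
  have hseg : (fun u : ℝ => (u : ℂ)) '' Set.Icc 0 1 ⊆ T := by
    rintro - ⟨u, ⟨hu0, hu1⟩, rfl⟩
    show φ u ∈ Metric.ball z r
    have : φ u = (1 - u) • a + u • b := by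
      funext i
      simp [hφ, Complex.real_smul]
      ring
    rw [this]
    exact (convex_ball z r) haB hbB (by linarith) hu0 (by ring)
  have hK : IsCompact ((fun u : ℝ => (u : ℂ)) '' Set.Icc 0 1) :=
    isCompact_Icc.image Complex.continuous_ofReal
  obtain ⟨ε, hε, hthick⟩ := hK.exists_thickening_subset_open hTopen hseg
  set Bad : Set ℝ := ⋃ ζ ∈ Z, ({-ζ.im / (2 * ζ.re), ζ.im / (2 * ζ.re - 2)} : Set ℝ) with hBad
  have hBadfin : Bad.Finite := hZfin.biUnion (fun ζ _ => (Set.finite_singleton _).insert _)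
  obtain ⟨s, hsI, hsBad⟩ := ((Set.Ioo_infinite hε).diff hBadfin).nonempty
  obtain ⟨hs0, hsε⟩ := hsI
  set m : ℂ := (1/2 : ℂ) - (s : ℂ) * Complex.I with hm
  have hm_re : m.re = 1/2 := by simp [hm]
  have hm_im : m.im = -s := by simp [hm]
  have hmemT : ∀ w : ℂ, w.re ∈ Set.Icc (0:ℝ) 1 → |w.im| ≤ s → w ∈ T := by
    intro w hre him
    apply hthick
    rw [Metric.mem_thickening_iff]
    refine ⟨(w.re : ℂ), ⟨w.re, hre, rfl⟩, ?_⟩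
    have hwi : w - (w.re : ℂ) = (w.im : ℂ) * Complex.I := by
      apply Complex.ext <;> simp
    rw [Complex.dist_eq, hwi]
    calc ‖(w.im : ℂ) * Complex.I‖ = |w.im| := by simp
      _ ≤ s := him
      _ < ε := hsε
  have h0Z : (0 : ℂ) ∉ Z := by
    intro h
    exact haH (by rw [← hQa]; exact h)
  have h1Z : (1 : ℂ) ∉ Z := by
    intro h
    exact hbH (by rw [← hQb]; exact h)
  have hseg1 : segment ℝ (0:ℂ) m ⊆ T \ Z := by
    rintro w hw
    rw [segment_eq_image] at hw
    obtain ⟨θ, ⟨hθ0, hθ1⟩, rfl⟩ := hw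
    set w : ℂ := (1 - θ) • (0:ℂ) + θ • m with hw
    have hwm : w = (θ : ℂ) * m := by
      rw [hw]; push_cast [Complex.real_smul]; ring
    have hwre : w.re = θ / 2 := by
      rw [hwm]; simp [Complex.mul_re, hm_re, hm_im]; ring
    have hwim : w.im = -(θ * s) := by
      rw [hwm]; simp [Complex.mul_im, hm_re, hm_im]
    refine ⟨hmemT w ⟨by rw [hwre]; linarith, by rw [hwre]; linarith⟩ ?_, ?_⟩
    · rw [hwim, abs_neg, abs_of_nonneg (by positivity)]
      nlinarith
    · intro hwZ
      rcases eq_or_lt_of_le hθ0 with h | hθpos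
      · apply h0Z
        have : w = 0 := by rw [hwm, ← h]; simp
        exact this ▸ hwZ
      · apply hsBad
        rw [hBad]
        apply Set.mem_biUnion hwZ
        apply Set.mem_insert_iff.mpr
        left
        rw [hwre, hwim]
        field_simp
  have hseg2 : segment ℝ m (1:ℂ) ⊆ T \ Z := by
    rintro w hw
    rw [segment_eq_image] at hw
    obtain ⟨θ, ⟨hθ0, hθ1⟩, rfl⟩ := hw
    set w : ℂ := (1 - θ) • m + θ • (1:ℂ) with hw
    have hwm : w = ((1:ℂ) - θ) * m + θ := by
      rw [hw]; push_cast [Complex.real_smul]; ring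
    have hwre : w.re = (1 + θ) / 2 := by
      rw [hwm]; simp [Complex.add_re, Complex.mul_re, Complex.sub_re, Complex.sub_im,
        hm_re, hm_im]; ring
    have hwim : w.im = -((1 - θ) * s) := by
      rw [hwm]; simp [Complex.add_im, Complex.mul_im, Complex.sub_re, Complex.sub_im,
        hm_re, hm_im]
    refine ⟨hmemT w ⟨by rw [hwre]; linarith, by rw [hwre]; linarith⟩ ?_, ?_⟩
    · rw [hwim, abs_neg, abs_of_nonneg (by nlinarith)]
      nlinarith
    · intro hwZ
      rcases eq_or_lt_of_le hθ1 with h | hθlt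
      · apply h1Z
        have : w = 1 := by rw [hwm, h]; simp
        exact this ▸ hwZ
      · apply hsBad
        rw [hBad]
        apply Set.mem_biUnion hwZ
        apply Set.mem_insert_iff.mpr
        right
        apply Set.mem_singleton_iff.mpr
        rw [hwre, hwim]
        have hd : 2 * ((1 + θ) / 2) - 2 = θ - 1 := by ring
        rw [hd]
        have : θ - 1 ≠ 0 := by linarith
        field_simp
        ring
  have j1 : JoinedIn (T \ Z) 0 m := JoinedIn.of_segment_subset hseg1
  have j2 : JoinedIn (T \ Z) m 1 := JoinedIn.of_segment_subset hseg2
  have j := (j1.trans j2).map hφcont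
  rw [hφ0, hφ1] at j
  apply j.mono
  rintro - ⟨t, ⟨htT, htZ⟩, rfl⟩
  refine ⟨htT, ?_⟩
  intro hc
  exact htZ (show Q.IsRoot t by rw [Polynomial.IsRoot, hQeval]; exact hc)
end
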